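/- Let G be an R-graph, D a divisor, and a > 0. Then h^0_{aG}(T_a(D)) = a · h^0_G(D), where h^0(D) is the infimum of deg(E) over divisors E ≥ 0 with |D - E| empty. -/
import Mathlib


/-- The homothety `T_a(D) = aD + (a-1)·I` on divisors, `I` the all-ones divisor. -/
def Ta {n : ℕ} (a : ℝ) (D : Fin n → ℝ) : Fin n → ℝ := fun i => a * D i + (a - 1)

/-- The weighted Laplacian of the weighted graph `p`. -/
def lap {n : ℕ} (p : Fin n → Fin n → ℝ) : Fin n → Fin n → ℝ :=
  fun i j => if i = j then ∑ l ∈ Finset.univ.erase i, p i l else -(p i j)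

/-- Nonemptiness of the linear system `|D|`. -/
def LSNonempty {n : ℕ} (p : Fin n → Fin n → ℝ) (D : Fin n → ℝ) : Prop :=
  ∃ m : Fin n → ℤ, ∀ i, D i + ∑ j, (m j : ℝ) * lap p i j > -1

/-- `h⁰(D)`: the minimum of `deg(E)` over effective divisors `E` with `|D - E| = ∅`. -/
noncomputable def h0 {n : ℕ} (p : Fin n → Fin n → ℝ) (D : Fin n → ℝ) : ℝ :=
  sInf {d : ℝ | ∃ E : Fin n → ℝ, (∀ i, 0 ≤ E i) ∧ ¬ LSNonempty p (D - E) ∧ d = ∑ i, E i}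

lemma lap_smul {n : ℕ} (p : Fin n → Fin n → ℝ) (a : ℝ) (i j : Fin n) :
    lap (fun i j => a * p i j) i j = a * lap p i j := by
  unfold lap
  split
  · exact (Finset.mul_sum _ _ _).symm
  · ring

lemma LSN_smul {n : ℕ} (p : Fin n → Fin n → ℝ) (a : ℝ) (ha : 0 < a) (D : Fin n → ℝ) :
    LSNonempty (fun i j => a * p i j) (Ta a D) ↔ LSNonempty p D := by
  unfold LSNonempty
  apply exists_congr; intro m
  apply forall_congr'; intro i
  have key : Ta a D i + ∑ j, (m j : ℝ) * lap (fun i j => a * p i j) i j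
      = a * (D i + ∑ j, (m j : ℝ) * lap p i j) + (a - 1) := by
    have hs : ∑ j, (m j : ℝ) * (a * lap p i j) = a * ∑ j, (m j : ℝ) * lap p i j := by
      rw [Finset.mul_sum]; exact Finset.sum_congr rfl fun j _ => by ring
    simp only [Ta, lap_smul, hs]
    ring
  rw [key]
  constructor <;> intro h <;> nlinarith

/-- `h⁰_{aG}(T_a(D)) = a · h⁰_G(D)`. -/
theorem stmt_12 {n : ℕ} (p : Fin n → Fin n → ℝ)
    (hsym : ∀ i j, p i j = p j i) (hnn : ∀ i j, 0 ≤ p i j) (hloop : ∀ i, p i i = 0)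
    (D : Fin n → ℝ) (a : ℝ) (ha : 0 < a) :
    h0 (fun i j => a * p i j) (Ta a D) = a * h0 p D := by
  unfold h0
  rw [← smul_eq_mul, ← Real.sInf_smul_of_nonneg ha.le]
  congr 1
  ext d
  constructor
  · rintro ⟨E, hE, hLS, rfl⟩
    refine ⟨∑ i, a⁻¹ * E i, ⟨fun i => a⁻¹ * E i, fun i => mul_nonneg (by positivity) (hE i), ?_, rfl⟩, ?_⟩
    · have : Ta a D - E = Ta a (D - fun i => a⁻¹ * E i) := by
        funext i
        simp only [Pi.sub_apply, Ta]
        field_simp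
        ring
      rw [this, LSN_smul p a ha] at hLS
      exact hLS
    · simp [smul_eq_mul, Finset.mul_sum, ← mul_assoc, mul_inv_cancel₀ ha.ne']
  · rintro ⟨d', ⟨E, hE, hLS, rfl⟩, rfl⟩
    refine ⟨fun i => a * E i, fun i => mul_nonneg ha.le (hE i), ?_, by simp [smul_eq_mul, Finset.mul_sum]⟩
    have : (Ta a D - fun i => a * E i) = Ta a (D - E) := by
      funext i; simp [Ta]; ring
    rw [this, LSN_smul p a ha]
    exact hLS
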